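/- arXiv:2510.26924 — 2 statements merged into one kernel-verified Lean document; each statement's English description precedes it below -/
import Mathlib

section
/- Let f : ℝ → ℝ be Lipschitz with constant L, let I = [α, β] ⊂ ℝ, let O ⊂ I be open, and suppose g : I → ℝ satisfies g = f on I \ O and g is Lipschitz with constant L on the closure of each connected component of O, with g = f at the endpoints of each component. Then g is Lipschitz on I with constant at most 2L. -/
/-!
Let `p ∈ O` and let `q` lie outside the component `J` of `O` containing `p`. The segment between
`p` and `q` meets the frontier of `J` at some `c`, and `c ∉ O`: otherwise the open component of
`c` would meet `J` and hence equal it. On `[p, c] ⊆ closure J` the bound for `g` holds by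
assumption; on `[c, q]` it follows from the same splitting started at a point outside `O`, where
`g = f`. Distances add along the segment, so `g` is in fact `L`-Lipschitz.
-/

open Set

theorem IsPreconnected.inter_frontier_nonempty {X : Type*} [TopologicalSpace X] {s t : Set X}
    (hs : IsPreconnected s) (hst : (s ∩ t).Nonempty) (hs't : (s \ t).Nonempty) :
    (s ∩ frontier t).Nonempty := by
  by_contra h
  have hfr : ∀ x ∈ s, x ∉ frontier t := fun x hx hxt => h ⟨x, hx, hxt⟩
  obtain ⟨x, hxs, hxt⟩ := hst
  obtain ⟨y, hys, hyt⟩ := hs't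
  have hcover : s ⊆ interior t ∪ (closure t)ᶜ := fun z hz => by
    by_contra hz'
    simp only [mem_union, mem_compl_iff, not_or, not_not] at hz'
    exact hfr z hz ⟨hz'.2, hz'.1⟩
  have hx : x ∈ interior t := by
    by_contra hx
    exact hfr x hxs ⟨subset_closure hxt, hx⟩
  have hy : y ∉ closure t := fun hy => hfr y hys ⟨hy, fun hy' => hyt (interior_subset hy')⟩
  obtain ⟨z, -, hzi, hzc⟩ := hs _ _ isOpen_interior isClosed_closure.isOpen_compl hcover
    ⟨x, hxs, hx⟩ ⟨y, hys, hy⟩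
  exact hzc (interior_subset_closure hzi)

theorem IsOpen.disjoint_frontier_connectedComponentIn {X : Type*} [TopologicalSpace X]
    [LocallyConnectedSpace X] {O : Set X} (hO : IsOpen O) (x : X) :
    Disjoint (frontier (connectedComponentIn O x)) O := by
  refine disjoint_left.2 fun b hb hbO => ?_
  obtain ⟨p, hpb, hpx⟩ := mem_closure_iff.1 (frontier_subset_closure hb) _
    hO.connectedComponentIn (mem_connectedComponentIn hbO)
  rw [connectedComponentIn_eq hpx, ← connectedComponentIn_eq hpb,
    hO.connectedComponentIn.frontier_eq] at hb
  exact hb.2 (mem_connectedComponentIn hbO)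

theorem dist_le_mul_of_mem_uIcc {E : Type*} [PseudoMetricSpace E] {g : ℝ → E} {K : ℝ}
    {x y c : ℝ} (hc : c ∈ uIcc x y) (hxc : dist (g x) (g c) ≤ K * dist x c)
    (hcy : dist (g c) (g y) ≤ K * dist c y) : dist (g x) (g y) ≤ K * dist x y :=
  calc dist (g x) (g y) ≤ dist (g x) (g c) + dist (g c) (g y) := dist_triangle _ _ _
    _ ≤ K * dist x c + K * dist c y := add_le_add hxc hcy
    _ = K * dist x y := by
      rw [← mul_add, dist_add_dist_of_mem_segment (segment_eq_uIcc x y ▸ hc)]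

section Glue

variable {E : Type*} [PseudoMetricSpace E] {f g : ℝ → E} {K : NNReal} {S O : Set ℝ}

theorem exists_mem_uIcc_closure_connectedComponentIn_diff (hO : IsOpen O) (hS : S.OrdConnected)
    {p q : ℝ} (hp : p ∈ S) (hq : q ∈ S) (hqO : q ∈ O) (hpq : p ∉ connectedComponentIn O q) :
    ∃ c ∈ uIcc p q, c ∈ S \ O ∧ c ∈ closure (connectedComponentIn O q) := by
  obtain ⟨c, hc, hcJ⟩ := isPreconnected_uIcc.inter_frontier_nonempty
    ⟨q, right_mem_uIcc, mem_connectedComponentIn hqO⟩ ⟨p, left_mem_uIcc, hpq⟩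
  exact ⟨c, hc, ⟨hS.uIcc_subset hp hq hc,
    disjoint_left.1 (hO.disjoint_frontier_connectedComponentIn q) hcJ⟩,
    frontier_subset_closure hcJ⟩

theorem LipschitzOnWith.dist_glue_le_of_notMem (hf : LipschitzOnWith K f S) (hO : IsOpen O)
    (hS : S.OrdConnected) (hfg : ∀ x ∈ S \ O, g x = f x)
    (hgO : ∀ x ∈ O, LipschitzOnWith K g (closure (connectedComponentIn O x)))
    {p q : ℝ} (hp : p ∈ S \ O) (hq : q ∈ S) : dist (g p) (g q) ≤ K * dist p q := by
  have hf' : ∀ a ∈ S \ O, ∀ b ∈ S \ O, dist (g a) (g b) ≤ K * dist a b := fun a ha b hb => by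
    rw [hfg a ha, hfg b hb]
    exact hf.dist_le_mul a ha.1 b hb.1
  by_cases hqO : q ∈ O
  · obtain ⟨c, hc, hcSO, hcJ⟩ := exists_mem_uIcc_closure_connectedComponentIn_diff hO hS hp.1 hq
      hqO fun hpJ => hp.2 (connectedComponentIn_subset O q hpJ)
    exact dist_le_mul_of_mem_uIcc hc (hf' p hp c hcSO)
      ((hgO q hqO).dist_le_mul c hcJ q (subset_closure (mem_connectedComponentIn hqO)))
  · exact hf' p hp q ⟨hq, hqO⟩

theorem LipschitzOnWith.glue_connectedComponentIn (hf : LipschitzOnWith K f S) (hO : IsOpen O)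
    (hS : S.OrdConnected) (hfg : ∀ x ∈ S \ O, g x = f x)
    (hgO : ∀ x ∈ O, LipschitzOnWith K g (closure (connectedComponentIn O x))) :
    LipschitzOnWith K g S := by
  refine LipschitzOnWith.of_dist_le_mul fun p hp q hq => ?_
  by_cases hpO : p ∈ O
  · have hpJ : p ∈ closure (connectedComponentIn O p) :=
      subset_closure (mem_connectedComponentIn hpO)
    by_cases hqJ : q ∈ connectedComponentIn O p
    · exact (hgO p hpO).dist_le_mul p hpJ q (subset_closure hqJ)
    · obtain ⟨c, hc, hcSO, hcJ⟩ :=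
        exists_mem_uIcc_closure_connectedComponentIn_diff hO hS hq hp hpO hqJ
      exact dist_le_mul_of_mem_uIcc (uIcc_comm q p ▸ hc) ((hgO p hpO).dist_le_mul p hpJ c hcJ)
        (hf.dist_glue_le_of_notMem hO hS hfg hgO hcSO hq)
  · exact hf.dist_glue_le_of_notMem hO hS hfg hgO ⟨hp, hpO⟩ hq

end Glue

theorem stmt4_general (f g : ℝ → ℝ) (L : NNReal) (α β : ℝ) (O : Set ℝ)
    (hO : IsOpen O)
    (hf : LipschitzWith L f)
    (hfg : ∀ x ∈ Icc α β \ O, g x = f x)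
    (hgO : ∀ x ∈ O, LipschitzOnWith L g (closure (connectedComponentIn O x))) :
    LipschitzOnWith (2 * L) g (Icc α β) :=
  (hf.lipschitzOnWith.glue_connectedComponentIn hO ordConnected_Icc hfg hgO).weaken
    (le_mul_of_one_le_left' one_le_two)

/-- Gluing lemma: modifying an `L`-Lipschitz function inside an open subset `O` of
`[α,β]`, staying `L`-Lipschitz on the closure of each connected component of `O` and
agreeing with the original function at the component endpoints and outside `O`,
produces a `2L`-Lipschitz function on `[α,β]`. -/
theorem stmt4 (f g : ℝ → ℝ) (L : NNReal) (α β : ℝ) (O : Set ℝ)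
    (hO : IsOpen O) (hOI : O ⊆ Icc α β)
    (hf : LipschitzWith L f)
    (hfg : ∀ x ∈ Icc α β \ O, g x = f x)
    (hgO : ∀ x ∈ O, LipschitzOnWith L g (closure (connectedComponentIn O x)))
    (hend : ∀ x ∈ O, ∀ y ∈ frontier (connectedComponentIn O x), g y = f y) :
    LipschitzOnWith (2 * L) g (Icc α β) :=
  stmt4_general f g L α β O hO hf hfg hgO
end

section
/- Let Ω ⊂ ℝ² be a bounded open set and Θ : Ω → Θ(Ω) ⊂ ℝ² a bi-Lipschitz homeomorphism with ‖DΘ − Id‖_{L∞} ≤ δ and ‖DΘ⁻¹∘Θ − Id‖_{L∞} ≤ δ for some δ < 1/4. Then for every u ∈ W¹₂(Ω), the quadratic form q(u) = ∫_Ω |det DΘ| |(DΘ⁻¹)ᵀ(Θ) ∇u|² dx satisfies q(u) ≥ (1 − Cδ) ∫_Ω |∇u|² dx for a universal constant C. -/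
/-!
Pointwise, `|det A| ≥ 1 - 2δ` (expand the 2×2 determinant of a matrix whose entries are
`δ`-close to those of the identity) and `‖Bᵀ v‖ ≥ (1 - δ) ‖v‖` (since `‖Bᵀ - I‖ = ‖B - I‖`),
so the integrand dominates `(1 - 2δ)(1 - δ)² ‖g‖² ≥ (1 - 4δ) ‖g‖²`; integrate with `C = 4`.
-/

open MeasureTheory ContinuousLinearMap Module

theorem Matrix.one_sub_two_mul_le_det_fin_two {M : Matrix (Fin 2) (Fin 2) ℝ} {δ : ℝ}
    (hδ : δ ≤ 1) (hM : ∀ i j, |(M - 1) i j| ≤ δ) :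
    1 - 2 * δ ≤ M.det := by
  have h00 := abs_le.mp (hM 0 0)
  have h01 := abs_le.mp (hM 0 1)
  have h10 := abs_le.mp (hM 1 0)
  have h11 := abs_le.mp (hM 1 1)
  simp only [Matrix.sub_apply, Matrix.one_apply_eq, Matrix.one_apply_ne zero_ne_one,
    Matrix.one_apply_ne one_ne_zero, sub_zero] at h00 h01 h10 h11
  rw [Matrix.det_fin_two]
  nlinarith [mul_nonneg (sub_nonneg.2 h00.1) (sub_nonneg.2 h11.1),
    mul_nonneg (sub_nonneg.2 h01.2) (neg_le_iff_add_nonneg.1 h10.1),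
    mul_nonneg (neg_le_iff_add_nonneg.1 h01.1) (sub_nonneg.2 h10.2)]

variable {E : Type*} [NormedAddCommGroup E] [InnerProductSpace ℝ E]

theorem OrthonormalBasis.abs_toMatrix_apply_le_opNorm {ι : Type*} [Fintype ι] [DecidableEq ι]
    (b : OrthonormalBasis ι ℝ E) (f : E →L[ℝ] E) (i j : ι) :
    |LinearMap.toMatrix b.toBasis b.toBasis f i j| ≤ ‖f‖ := by
  rw [LinearMap.toMatrix_apply, OrthonormalBasis.coe_toBasis,
    OrthonormalBasis.coe_toBasis_repr_apply]
  calc |b.repr (f (b j)) i| ≤ ‖b.repr (f (b j))‖ := by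
        simpa using PiLp.norm_apply_le (b.repr (f (b j))) i
    _ = ‖f (b j)‖ := b.repr.norm_map _
    _ ≤ ‖f‖ * ‖b j‖ := f.le_opNorm _
    _ = ‖f‖ := by rw [b.orthonormal.1 j, mul_one]

theorem one_sub_two_mul_le_det_of_norm_sub_id_le [FiniteDimensional ℝ E]
    (hE : finrank ℝ E = 2) {A : E →L[ℝ] E} {δ : ℝ} (hδ : δ ≤ 1)
    (hA : ‖A - ContinuousLinearMap.id ℝ E‖ ≤ δ) :
    1 - 2 * δ ≤ LinearMap.det A.toLinearMap := by
  classical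
  let b : OrthonormalBasis (Fin 2) ℝ E := (stdOrthonormalBasis ℝ E).reindex (finCongr hE)
  rw [← LinearMap.det_toMatrix b.toBasis]
  refine Matrix.one_sub_two_mul_le_det_fin_two hδ fun i j => ?_
  have := b.abs_toMatrix_apply_le_opNorm (A - ContinuousLinearMap.id ℝ E) i j
  rw [ContinuousLinearMap.toLinearMap_sub, map_sub, ContinuousLinearMap.coe_id,
    LinearMap.toMatrix_id] at this
  exact this.trans hA

theorem one_sub_mul_norm_le_norm_apply_of_norm_sub_id_le {F : Type*} [SeminormedAddCommGroup F]
    [NormedSpace ℝ F] {T : F →L[ℝ] F} {δ : ℝ} (hT : ‖T - ContinuousLinearMap.id ℝ F‖ ≤ δ)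
    (v : F) :
    (1 - δ) * ‖v‖ ≤ ‖T v‖ := by
  have hdiff : ‖T v - v‖ ≤ δ * ‖v‖ :=
    ((T - ContinuousLinearMap.id ℝ F).le_opNorm v).trans
      (mul_le_mul_of_nonneg_right hT (norm_nonneg v))
  have := norm_sub_norm_le v (v - T v)
  rw [sub_sub_cancel, norm_sub_rev] at this
  linarith

theorem norm_adjoint_sub_id [CompleteSpace E] (B : E →L[ℝ] E) :
    ‖adjoint B - ContinuousLinearMap.id ℝ E‖ = ‖B - ContinuousLinearMap.id ℝ E‖ := by
  rw [← adjoint.norm_map (B - ContinuousLinearMap.id ℝ E), map_sub, adjoint_id]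

theorem one_sub_four_mul_mul_sq_le_abs_det_mul_sq_adjoint [FiniteDimensional ℝ E]
    (hE : finrank ℝ E = 2) {A B : E →L[ℝ] E} {δ : ℝ}
    (hA : ‖A - ContinuousLinearMap.id ℝ E‖ ≤ δ) (hB : ‖B - ContinuousLinearMap.id ℝ E‖ ≤ δ)
    (v : E) :
    (1 - 4 * δ) * ‖v‖ ^ 2 ≤ |LinearMap.det A.toLinearMap| * ‖adjoint B v‖ ^ 2 := by
  have hδ : 0 ≤ δ := (norm_nonneg _).trans hA
  rcases lt_or_ge (1 / 2) δ with hδ_large | hδ_small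
  · have : (1 - 4 * δ) * ‖v‖ ^ 2 ≤ 0 :=
      mul_nonpos_of_nonpos_of_nonneg (by linarith) (by positivity)
    exact this.trans (by positivity)
  have hdet : 1 - 2 * δ ≤ |LinearMap.det A.toLinearMap| :=
    (one_sub_two_mul_le_det_of_norm_sub_id_le hE (by linarith) hA).trans (le_abs_self _)
  have hadj : ((1 - δ) * ‖v‖) ^ 2 ≤ ‖adjoint B v‖ ^ 2 :=
    pow_le_pow_left₀ (by nlinarith [norm_nonneg v])
      (one_sub_mul_norm_le_norm_apply_of_norm_sub_id_le ((norm_adjoint_sub_id B).trans_le hB) v) 2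
  calc (1 - 4 * δ) * ‖v‖ ^ 2
      ≤ (1 - 2 * δ) * ((1 - δ) * ‖v‖) ^ 2 := by
        nlinarith [mul_nonneg (mul_nonneg (sq_nonneg δ) (by linarith : (0 : ℝ) ≤ 5 - 2 * δ))
          (sq_nonneg ‖v‖)]
    _ ≤ |LinearMap.det A.toLinearMap| * ‖adjoint B v‖ ^ 2 :=
        mul_le_mul hdet hadj (sq_nonneg _) (abs_nonneg _)

/-- Coercivity of the transformed Dirichlet form: if the a.e. differential `A = DΘ`
and `B = DΘ⁻¹ ∘ Θ` are `δ`-close to the identity (`δ < 1/4`) and mutually inverse,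
then `∫ |det DΘ| |(DΘ⁻¹)ᵀ(Θ) ∇u|² ≥ (1 - Cδ) ∫ |∇u|²` for a universal constant `C`,
where `g = ∇u` is the (L²) gradient of `u ∈ W¹₂(Ω)`. -/
theorem stmt7 :
    ∃ Cu : ℝ, 0 < Cu ∧
      ∀ Ω : Set (EuclideanSpace ℝ (Fin 2)), MeasurableSet Ω →
      ∀ (A B : EuclideanSpace ℝ (Fin 2) →
          (EuclideanSpace ℝ (Fin 2) →L[ℝ] EuclideanSpace ℝ (Fin 2)))
        (δ : ℝ), 0 ≤ δ → δ < 1 / 4 →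
        (∀ x ∈ Ω, ‖A x - ContinuousLinearMap.id ℝ (EuclideanSpace ℝ (Fin 2))‖ ≤ δ) →
        (∀ x ∈ Ω, ‖B x - ContinuousLinearMap.id ℝ (EuclideanSpace ℝ (Fin 2))‖ ≤ δ) →
        (∀ x ∈ Ω, (B x).comp (A x) = ContinuousLinearMap.id ℝ (EuclideanSpace ℝ (Fin 2))) →
        ∀ g : EuclideanSpace ℝ (Fin 2) → EuclideanSpace ℝ (Fin 2),
          IntegrableOn (fun x => ‖g x‖ ^ 2) Ω volume →
          IntegrableOn (fun x => |LinearMap.det (A x).toLinearMap| *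
              ‖ContinuousLinearMap.adjoint (B x) (g x)‖ ^ 2) Ω volume →
          (1 - Cu * δ) * ∫ x in Ω, ‖g x‖ ^ 2 ≤
            ∫ x in Ω, |LinearMap.det (A x).toLinearMap| *
              ‖ContinuousLinearMap.adjoint (B x) (g x)‖ ^ 2 := by
  refine ⟨4, by norm_num, fun Ω hΩ A B δ _ _ hA hB _ g hg hq => ?_⟩
  rw [← integral_const_mul]
  exact setIntegral_mono_on (hg.const_mul _) hq hΩ fun x hx =>
    one_sub_four_mul_mul_sq_le_abs_det_mul_sq_adjoint finrank_euclideanSpace_fin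
      (hA x hx) (hB x hx) (g x)
end
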